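/- Let k ≥ 1 and let 𝐭 be an index tuple containing each index of {0,...,k−1} at least once. If (a:b) is a string with indices from {0,...,k−2} such that the concatenation (a:b, 𝐭) satisfies the SIP, then heads(a:b, 𝐭) = heads(𝐭). -/

import Mathlib

/-- The Successor Infix Property: between any two equal indices of the tuple there is an
occurrence of their successor. -/
def SIP (t : List ℕ) : Prop :=
  ∀ a b : Fin t.length, a < b → t.get a = t.get b →
    ∃ c : Fin t.length, a < c ∧ c < b ∧ t.get c = t.get a + 1

/-- One swap of two adjacent distinct commuting indices (indices differing by ≥ 2). -/
def CommuteStep (t t' : List ℕ) : Prop :=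
  ∃ (u v : List ℕ) (x y : ℕ), x ≠ y ∧ x + 1 ≠ y ∧ y + 1 ≠ x ∧
    t = u ++ x :: y :: v ∧ t' = u ++ y :: x :: v

/-- Equivalence of index tuples: generated by swapping adjacent commuting indices. -/
def TupleEquiv : List ℕ → List ℕ → Prop := Relation.ReflTransGen CommuteStep

/-- The string `(a : b) = (a, a+1, ..., b)`. -/
def strTuple (a b : ℕ) : List ℕ := List.range' a (b + 1 - a)

/-- The tuple `(a_s : b_s, ..., a_1 : b_1)` built from a list of pairs of endpoints. -/
def buildCSF (ps : List (ℕ × ℕ)) : List ℕ :=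
  (ps.map fun p => strTuple p.1 p.2).flatten

/-- `ps` encodes a tuple in column standard form: each pair `(a_j, b_j)` has `a_j ≤ b_j`
and the heads `b_s > b_{s-1} > ... > b_1` are strictly decreasing. -/
def IsCSFDecomp (ps : List (ℕ × ℕ)) : Prop :=
  (∀ pr ∈ ps, pr.1 ≤ pr.2) ∧ List.Chain' (· > ·) (ps.map Prod.snd)

/-- The set of heads of an index tuple `t`: the right endpoints of the strings of the
column standard form of `t`. -/
def headsSet (t : List ℕ) : Set ℕ :=
  {h | ∃ ps, IsCSFDecomp ps ∧ TupleEquiv t (buildCSF ps) ∧ h ∈ ps.map Prod.snd}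

/-!
For a tuple with the SIP, `h` is a head exactly when the last of its letters equal to `h` or
`h + 1` is `h`. The `{h, h+1}`-subword is invariant under commuting swaps, since `h` and `h + 1`
never commute; in column standard form it ends in `h` precisely when some string ends at `h`;
and every SIP tuple has a column standard form, built by adding its letters one at a time at the
front: the SIP says that the new letter `x` is not followed by an `x` before the next `x + 1`,
which is exactly what is needed to slot it into the columns. Finally, prepending letters that
all occur in `t` changes no nonempty `{h, h+1}`-subword at its end and creates no new one.
-/

def pairFilter (h : ℕ) (l : List ℕ) : List ℕ := l.filter fun x => x = h ∨ x = h + 1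

theorem pairFilter_append (h : ℕ) (u v : List ℕ) :
    pairFilter h (u ++ v) = pairFilter h u ++ pairFilter h v :=
  List.filter_append ..

theorem pairFilter_eq_nil_iff {h : ℕ} {l : List ℕ} :
    pairFilter h l = [] ↔ h ∉ l ∧ h + 1 ∉ l := by
  simp only [pairFilter, List.filter_eq_nil_iff, decide_eq_true_eq]
  grind

theorem CommuteStep.pairFilter_eq {u v : List ℕ} (huv : CommuteStep u v) (h : ℕ) :
    pairFilter h u = pairFilter h v := by
  obtain ⟨c, d, x, y, hxy, hx, hy, rfl, rfl⟩ := huv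
  have : ¬((x = h ∨ x = h + 1) ∧ (y = h ∨ y = h + 1)) := by omega
  simp only [pairFilter, List.filter_append, List.filter_cons]
  split_ifs <;> simp_all

theorem TupleEquiv.pairFilter_eq {u v : List ℕ} (huv : TupleEquiv u v) (h : ℕ) :
    pairFilter h u = pairFilter h v := by
  induction huv with
  | refl => rfl
  | tail _ hstep ih => exact ih.trans (hstep.pairFilter_eq h)

theorem TupleEquiv.append_left (c : List ℕ) {u v : List ℕ} (huv : TupleEquiv u v) :
    TupleEquiv (c ++ u) (c ++ v) := by
  refine Relation.ReflTransGen.lift (c ++ ·) (fun _ _ hstep => ?_) _ _ huv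
  obtain ⟨u', v', x, y, hxy, hx, hy, rfl, rfl⟩ := hstep
  exact ⟨c ++ u', v', x, y, hxy, hx, hy, by simp, by simp⟩

theorem TupleEquiv.cons (x : ℕ) {u v : List ℕ} (huv : TupleEquiv u v) :
    TupleEquiv (x :: u) (x :: v) :=
  huv.append_left [x]

theorem tupleEquiv_cons_append {x : ℕ} {c : List ℕ} (hc : ∀ y ∈ c, x + 1 < y) (v : List ℕ) :
    TupleEquiv (x :: (c ++ v)) (c ++ x :: v) := by
  induction c with
  | nil => exact .refl
  | cons z c ih =>
    have hz : x + 1 < z := hc z List.mem_cons_self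
    refine .head ⟨[], c ++ v, x, z, by omega, by omega, by omega, rfl, rfl⟩ ?_
    exact (ih fun y hy => hc y (List.mem_cons_of_mem z hy)).cons z

theorem mem_strTuple {x a b : ℕ} : x ∈ strTuple a b ↔ a ≤ x ∧ x ≤ b := by
  rw [strTuple, List.mem_range'_1]
  omega

theorem strTuple_self (x : ℕ) : strTuple x x = [x] := by
  simp [strTuple]

theorem strTuple_eq_cons {a b : ℕ} (hab : a ≤ b) : strTuple a b = a :: strTuple (a + 1) b := by
  rw [strTuple, strTuple, show b + 1 - a = b + 1 - (a + 1) + 1 by omega, List.range'_succ]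

theorem pairFilter_strTuple (h a b : ℕ) :
    pairFilter h (strTuple a b) =
      (if a ≤ h ∧ h ≤ b then [h] else []) ++ (if a ≤ h + 1 ∧ h + 1 ≤ b then [h + 1] else []) := by
  refine List.Pairwise.eq_of_mem_iff (r := (· < ·)) ?_ ?_ fun x => ?_
  · exact (List.pairwise_lt_range' 1).sublist List.filter_sublist
  · split_ifs <;> simp
  · simp only [pairFilter, List.mem_filter, mem_strTuple, decide_eq_true_eq]
    split_ifs <;> simp <;> omega

theorem SIP.of_cons {x : ℕ} {l : List ℕ} (h : SIP (x :: l)) : SIP l := by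
  intro i j hij hval
  obtain ⟨c, hic, hcj, hc⟩ := h i.succ j.succ (Fin.succ_lt_succ_iff.mpr hij) hval
  obtain ⟨c, rfl⟩ := Fin.exists_succ_eq.mpr (Fin.ne_zero_of_lt hic)
  exact ⟨c, Fin.succ_lt_succ_iff.mp hic, Fin.succ_lt_succ_iff.mp hcj, hc⟩

theorem SIP.of_append_right {u v : List ℕ} (h : SIP (u ++ v)) : SIP v := by
  induction u with
  | nil => exact h
  | cons x u ih => exact ih h.of_cons

theorem SIP.succ_mem_of_cons_append {x : ℕ} {u v : List ℕ} (h : SIP (x :: (u ++ x :: v))) :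
    x + 1 ∈ u := by
  obtain ⟨c, h0c, hcu, hc⟩ :=
    h ⟨0, by simp⟩ ⟨u.length + 1, by simp⟩ (by simp [Fin.lt_def]) (by simp)
  obtain ⟨c, rfl⟩ := Fin.exists_succ_eq.mpr (Fin.ne_zero_of_lt h0c)
  have hc' : (c : ℕ) < u.length := by simpa [Fin.lt_def] using hcu
  simp only [List.get_eq_getElem, Fin.val_succ, List.getElem_cons_succ,
    List.getElem_append_left hc', List.getElem_cons_zero] at hc
  exact hc ▸ List.getElem_mem hc'

theorem SIP.head?_pairFilter_ne {x : ℕ} {l : List ℕ} (h : SIP (x :: l)) :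
    (pairFilter x l).head? ≠ some x := by
  rw [pairFilter, List.head?_filter, Ne, List.find?_eq_some_iff_append]
  rintro ⟨-, u, v, rfl, hu⟩
  simpa using hu (x + 1) h.succ_mem_of_cons_append

theorem buildCSF_cons (p : ℕ × ℕ) (ps : List (ℕ × ℕ)) :
    buildCSF (p :: ps) = strTuple p.1 p.2 ++ buildCSF ps :=
  rfl

theorem pairFilter_buildCSF_eq_nil {h : ℕ} {ps : List (ℕ × ℕ)}
    (hps : ∀ c ∈ ps.map Prod.snd, c < h) : pairFilter h (buildCSF ps) = [] := by
  have hlt : ∀ y ∈ buildCSF ps, y < h := by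
    simp only [buildCSF, List.mem_flatten, List.mem_map]
    rintro y ⟨_, ⟨p, hp, rfl⟩, hy⟩
    exact (mem_strTuple.mp hy).2.trans_lt (hps p.2 (List.mem_map_of_mem hp))
  rw [pairFilter_eq_nil_iff]
  exact ⟨fun hh => (hlt h hh).false, fun hh => by have := hlt _ hh; omega⟩

theorem isCSFDecomp_iff_pairwise {ps : List (ℕ × ℕ)} :
    IsCSFDecomp ps ↔ (∀ p ∈ ps, p.1 ≤ p.2) ∧ (ps.map Prod.snd).Pairwise (· > ·) :=
  and_congr_right' List.isChain_iff_pairwise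

theorem isCSFDecomp_nil : IsCSFDecomp [] :=
  isCSFDecomp_iff_pairwise.mpr (by simp)

theorem isCSFDecomp_cons {a b : ℕ} {ps : List (ℕ × ℕ)} :
    IsCSFDecomp ((a, b) :: ps) ↔ a ≤ b ∧ (∀ c ∈ ps.map Prod.snd, c < b) ∧ IsCSFDecomp ps := by
  simp only [isCSFDecomp_iff_pairwise, List.mem_cons, forall_eq_or_imp, List.map_cons,
    List.pairwise_cons]
  tauto

theorem IsCSFDecomp.mem_heads_iff {ps : List (ℕ × ℕ)} (hps : IsCSFDecomp ps) (h : ℕ) :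
    h ∈ ps.map Prod.snd ↔ (pairFilter h (buildCSF ps)).getLast? = some h := by
  induction ps with
  | nil => simp [buildCSF, pairFilter]
  | cons p ps ih =>
    obtain ⟨a, b⟩ := p
    obtain ⟨hab, hlt, hps⟩ := isCSFDecomp_cons.mp hps
    rw [buildCSF_cons, pairFilter_append]
    by_cases hrest : pairFilter h (buildCSF ps) = []
    · have hh : h ∉ ps.map Prod.snd := by simp [ih hps, hrest]
      simp only [hrest, List.append_nil, pairFilter_strTuple, List.map_cons, List.mem_cons, hh,
        or_false]
      split_ifs <;> simp <;> omega
    · have hb : h ≠ b := by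
        rintro rfl
        exact hrest (pairFilter_buildCSF_eq_nil hlt)
      rw [List.getLast?_append_of_ne_nil _ hrest, ← ih hps]
      simp [hb]

theorem IsCSFDecomp.exists_cons_equiv {ps : List (ℕ × ℕ)} (hps : IsCSFDecomp ps) {x : ℕ}
    (hx : (pairFilter x (buildCSF ps)).head? ≠ some x) :
    ∃ qs, IsCSFDecomp qs ∧ TupleEquiv (x :: buildCSF ps) (buildCSF qs) ∧
      qs.map Prod.snd ⊆ x :: ps.map Prod.snd := by
  induction ps with
  | nil =>
    refine ⟨[(x, x)], isCSFDecomp_cons.mpr ⟨le_rfl, by simp, isCSFDecomp_nil⟩, ?_, by simp⟩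
    rw [buildCSF_cons, strTuple_self]
    exact .refl
  | cons p ps ih =>
    obtain ⟨a, b⟩ := p
    obtain ⟨hab, hlt, hps'⟩ := isCSFDecomp_cons.mp hps
    rw [buildCSF_cons] at hx ⊢
    obtain hbx | hxa | rfl | hxa : b < x ∨ x + 1 < a ∨ x + 1 = a ∨ a ≤ x ∧ x ≤ b := by omega
    · refine ⟨(x, x) :: (a, b) :: ps, isCSFDecomp_cons.mpr ⟨le_rfl, ?_, hps⟩, ?_, by simp⟩
      · simp only [List.map_cons, List.mem_cons, forall_eq_or_imp]
        exact ⟨hbx, fun c hc => (hlt c hc).trans hbx⟩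
      · rw [buildCSF_cons, strTuple_self, buildCSF_cons]
        exact .refl
    · have hcol : pairFilter x (strTuple a b) = [] := by
        rw [pairFilter_eq_nil_iff, mem_strTuple, mem_strTuple]
        omega
      rw [pairFilter_append, hcol, List.nil_append] at hx
      obtain ⟨qs, hqs, hequiv, hsub⟩ := ih hps' hx
      refine ⟨(a, b) :: qs, isCSFDecomp_cons.mpr ⟨hab, fun c hc => ?_, hqs⟩, ?_, ?_⟩
      · rcases List.mem_cons.mp (hsub hc) with rfl | hc
        · omega
        · exact hlt c hc
      · refine (tupleEquiv_cons_append (fun y hy => ?_) _).trans (hequiv.append_left _)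
        have := mem_strTuple.mp hy
        omega
      · rw [List.map_cons, List.cons_subset]
        exact ⟨by simp,
          List.Subset.trans hsub (List.cons_subset_cons _ (List.subset_cons_self _ _))⟩
    · refine ⟨(x, b) :: ps, isCSFDecomp_cons.mpr ⟨by omega, hlt, hps'⟩, ?_, by simp⟩
      rw [buildCSF_cons, strTuple_eq_cons (by omega : x ≤ b)]
      exact .refl
    · -- `x` lies in `(a : b)`, so the `{x, x+1}`-subword starts with `x`
      exact absurd (by rw [pairFilter_append, pairFilter_strTuple, if_pos hxa]; rfl) hx

theorem SIP.exists_csf {l : List ℕ} (h : SIP l) :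
    ∃ ps, IsCSFDecomp ps ∧ TupleEquiv l (buildCSF ps) := by
  induction l with
  | nil => exact ⟨[], isCSFDecomp_nil, .refl⟩
  | cons x l ih =>
    obtain ⟨ps, hps, hequiv⟩ := ih h.of_cons
    obtain ⟨qs, hqs, hequiv', -⟩ :=
      hps.exists_cons_equiv (hequiv.pairFilter_eq x ▸ h.head?_pairFilter_ne)
    exact ⟨qs, hqs, (hequiv.cons x).trans hequiv'⟩

theorem SIP.headsSet_eq {u : List ℕ} (hu : SIP u) :
    headsSet u = {h | (pairFilter h u).getLast? = some h} := by
  ext h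
  refine ⟨fun ⟨ps, hps, hequiv, hh⟩ => ?_, fun hh => ?_⟩
  · rwa [Set.mem_ofPred_eq, hequiv.pairFilter_eq, ← hps.mem_heads_iff]
  · obtain ⟨ps, hps, hequiv⟩ := hu.exists_csf
    exact ⟨ps, hps, hequiv, (hps.mem_heads_iff h).mpr (hequiv.pairFilter_eq h ▸ hh)⟩

theorem headsSet_append_of_subset {s t : List ℕ} (hst : SIP (s ++ t)) (hsub : s ⊆ t) :
    headsSet (s ++ t) = headsSet t := by
  rw [hst.headsSet_eq, hst.of_append_right.headsSet_eq]
  ext h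
  simp only [Set.mem_ofPred_eq, pairFilter_append]
  by_cases ht : pairFilter h t = []
  · have hs : pairFilter h s = [] := by
      rw [pairFilter_eq_nil_iff] at ht ⊢
      exact ⟨mt (@hsub _) ht.1, mt (@hsub _) ht.2⟩
    simp [hs, ht]
  · rw [List.getLast?_append_of_ne_nil _ ht]

theorem heads_string_append_general (k : ℕ) (t : List ℕ)
    (htall : ∀ i, i < k → i ∈ t)
    (a b : ℕ) (hb : b + 2 ≤ k)
    (hsip : SIP (strTuple a b ++ t)) :
    headsSet (strTuple a b ++ t) = headsSet t :=
  headsSet_append_of_subset hsip fun i hi => htall i (by have := mem_strTuple.mp hi; omega)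

/-- Lemma: if `t` contains each index of `{0,…,k-1}` at least once and `(a:b)` is a string
with indices from `{0,…,k-2}` such that `(a:b, t)` satisfies the SIP, then
`heads(a:b, t) = heads(t)`. -/
theorem heads_string_append (k : ℕ) (hk : 1 ≤ k) (t : List ℕ)
    (ht : ∀ i ∈ t, i < k) (htall : ∀ i, i < k → i ∈ t)
    (a b : ℕ) (hab : a ≤ b) (hb : b + 2 ≤ k)
    (hsip : SIP (strTuple a b ++ t)) :
    headsSet (strTuple a b ++ t) = headsSet t :=
  heads_string_append_general k t htall a b hb hsip
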